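/- arXiv:2601.15783 — 6 statements merged into one kernel-verified Lean document; each statement's English description precedes it below -/
import Mathlib

section
/- If t = n, then the clique number of the shuriken graph Shu^t_n(G) equals |V(G)| + 1. -/
open SimpleGraph

/-- The (t,n)-shuriken graph of `G`: vertices are `n` copies of `V(G) ∪ {z}`,
encoded as `Fin n × Option V` (`(i, some x)` is `x_{i+1}`, `(i, none)` is `z_{i+1}`).
Adjacency (symmetrized, loops removed by `fromRel`):
(1) `u_i v_j` whenever `uv ∈ E(G)` (any copies);
(2) all pairs within copy `i` for `i ≤ t` (copy made complete);
(3) all pairs between copy `i` and copy `n+t+1-i` for `t+1 ≤ i ≤ (n+t)/2`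
    (0-indexed: `i + j = n + t - 1` with `t ≤ i`). -/
def shuriken {V : Type*} (G : SimpleGraph V) (n t : ℕ) :
    SimpleGraph (Fin n × Option V) :=
  SimpleGraph.fromRel (fun p q =>
    (∃ x y, p.2 = some x ∧ q.2 = some y ∧ G.Adj x y) ∨
    (p.1 = q.1 ∧ (p.1 : ℕ) < t) ∨
    (t ≤ (p.1 : ℕ) ∧ (p.1 : ℕ) + (q.1 : ℕ) = n + t - 1))

theorem shuriken_cliqueNum_eq_of_t_eq_n {V : Type*} [Fintype V] (G : SimpleGraph V)
    (n : ℕ) (hn : 1 ≤ n) :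
    (shuriken G n n).cliqueNum = Fintype.card V + 1 := by
  classical
  apply le_antisymm
  · -- upper bound: snd is injective on any clique
    obtain ⟨s, hs⟩ := (shuriken G n n).exists_isNClique_cliqueNum
    rw [← hs.card_eq]
    have hinj : Set.InjOn Prod.snd (s : Set (Fin n × Option V)) := by
      intro p hp q hq hpq
      by_contra hne
      have hadj := hs.isClique hp hq hne
      have hfst : p.1 ≠ q.1 := by
        intro h; exact hne (Prod.ext h hpq)
      simp only [shuriken, fromRel_adj] at hadj
      rcases hadj.2 with h | h
      · rcases h with ⟨x, y, hx, hy, hxy⟩ | ⟨h, _⟩ | ⟨h, _⟩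
        · rw [hpq, hy] at hx
          exact G.irrefl (Option.some_injective _ hx ▸ hxy)
        · exact hfst h
        · exact absurd h (not_le.2 p.1.isLt)
      · rcases h with ⟨x, y, hx, hy, hxy⟩ | ⟨h, _⟩ | ⟨h, _⟩
        · rw [← hpq, hy] at hx
          exact G.irrefl (Option.some_injective _ hx ▸ hxy)
        · exact hfst h.symm
        · exact absurd h (not_le.2 q.1.isLt)
    calc s.card ≤ Fintype.card (Option V) := by
          have := Finset.card_le_card_of_injOn Prod.snd
            (fun a _ => Finset.mem_univ _) hinj
          simpa using this
      _ = Fintype.card V + 1 := by simp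
  · -- lower bound: copy 0 is a clique of size |V|+1
    have e : Function.Injective (fun v : Option V => ((⟨0, hn⟩ : Fin n), v)) := by
      intro a b h; simpa using h
    have hclique : (shuriken G n n).IsClique
        ((Finset.univ.map ⟨_, e⟩ : Finset (Fin n × Option V)) : Set (Fin n × Option V)) := by
      intro p hp q hq hne
      simp only [Finset.coe_map, Set.mem_image, Finset.mem_coe, Finset.coe_univ,
        Set.image_univ, Set.mem_range, Function.Embedding.coeFn_mk] at hp hq
      obtain ⟨a, rfl⟩ := hp
      obtain ⟨b, rfl⟩ := hq
      simp only [shuriken, fromRel_adj]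
      exact ⟨hne, Or.inl (Or.inr (Or.inl (by simp; omega)))⟩
    have := hclique.card_le_cliqueNum
    simpa using this
end

section
/- If t = n, then the chromatic number of the shuriken graph Shu^n_n(G) equals |V(G)| + 1. -/
/-!
Both bounds come from homomorphisms between `shuriken G n n` and the complete graph on
`Option V`. Projecting every vertex to its `Option V`-coordinate is a homomorphism onto it:
two adjacent vertices with the same coordinate lie in distinct copies and are not joined by a
`G`-edge, so they could only be joined by an edge of type (3), and for `t = n` there are none.
Conversely, each copy is complete, hence a clique on `|V(G)| + 1` vertices.
-/

open SimpleGraph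

namespace shuriken

variable {V : Type*} {G : SimpleGraph V} {n t : ℕ}

def sndHom (h : n ≤ t) : shuriken G n t →g (⊤ : SimpleGraph (Option V)) where
  toFun := Prod.snd
  map_rel' {p q} hpq := by
    obtain ⟨hne, hrel⟩ := (fromRel_adj _ _ _).1 hpq
    have hp := p.1.isLt
    rcases hrel with (⟨x, y, hx, hy, hxy⟩ | ⟨he, -⟩ | ⟨hle, -⟩) |
        (⟨x, y, hx, hy, hxy⟩ | ⟨he, -⟩ | ⟨hle, -⟩)
    · simpa [top_adj, hx, hy] using hxy.ne
    · exact fun hsnd => hne (Prod.ext he hsnd)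
    · omega
    · simpa [top_adj, hx, hy] using hxy.ne'
    · exact fun hsnd => hne (Prod.ext he.symm hsnd)
    · have hq := q.1.isLt
      omega

def copyHom (i : Fin n) (hi : (i : ℕ) < t) : (⊤ : SimpleGraph (Option V)) →g shuriken G n t where
  toFun := Prod.mk i
  map_rel' hab := (fromRel_adj _ _ _).2
    ⟨fun h => hab (Prod.mk.inj h).2, Or.inl (Or.inr (Or.inl ⟨rfl, hi⟩))⟩

end shuriken

theorem shuriken_chromaticNumber_eq_of_t_eq_n {V : Type*} [Fintype V] (G : SimpleGraph V)
    (n : ℕ) (hn : 1 ≤ n) :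
    (shuriken G n n).chromaticNumber = ((Fintype.card V + 1 : ℕ) : ℕ∞) := by
  rw [← Fintype.card_option, ← chromaticNumber_top]
  exact le_antisymm (chromaticNumber_mono_of_hom (shuriken.sndHom le_rfl))
    (chromaticNumber_mono_of_hom (shuriken.copyHom ⟨0, hn⟩ hn))
end

section
/- If n − t > 0, then the chromatic number of the shuriken graph Shu^t_n(G) is at least max{|V(G)| + 1, 2χ(G)}, where χ(G) is the chromatic number of G. -/
/-!
Copy 1 of `V(G) ∪ {z}` is complete, which gives a clique on `|V(G)| + 1` vertices. As `n - t` is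
even and positive, it is at least 2, so copy `t + 1` is paired with a different copy, namely copy
`n`; their `G`-vertices span the join `G + G`. In a colouring of a join the two sides use disjoint
sets of colours, each set large enough to colour `G`, whence `2χ(G)` colours are needed.
-/

open SimpleGraph

namespace SimpleGraph

variable {V W α : Type*}

def join (G : SimpleGraph V) (H : SimpleGraph W) : SimpleGraph (V ⊕ W) :=
  (G ⊕g H) ⊔ completeBipartiteGraph V W

variable {G : SimpleGraph V} {H : SimpleGraph W}

@[simp]
theorem join_adj_inl {u v : V} : (G.join H).Adj (.inl u) (.inl v) ↔ G.Adj u v := by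
  simp [join]

@[simp]
theorem join_adj_inr {u v : W} : (G.join H).Adj (.inr u) (.inr v) ↔ H.Adj u v := by
  simp [join]

theorem join_adj_inl_inr (v : V) (w : W) : (G.join H).Adj (.inl v) (.inr w) := by
  simp [join]

theorem Coloring.chromaticNumber_le_ncard_range [Finite α]
    (C : G.Coloring α) : G.chromaticNumber ≤ (Set.range C).ncard := by
  have : Fintype (Set.range C) := Fintype.ofFinite _
  let D : G.Coloring (Set.range C) :=
    Coloring.mk (fun v => ⟨C v, v, rfl⟩) fun h e => C.valid h (congrArg Subtype.val e)
  rw [← Nat.card_coe_set_eq, Nat.card_eq_fintype_card]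
  exact D.colorable.chromaticNumber_le

theorem chromaticNumber_add_le_chromaticNumber_join :
    G.chromaticNumber + H.chromaticNumber ≤ (G.join H).chromaticNumber := by
  rw [chromaticNumber_eq_biInf]
  refine le_iInf₂ fun m hm => ?_
  obtain ⟨C⟩ := hm
  let C' : (G ⊕g H).Coloring (Fin m) := C.comp (Hom.ofLE le_sup_left)
  have hdisj : Disjoint (Set.range C'.sumLeft) (Set.range C'.sumRight) := by
    rw [Set.disjoint_left]
    rintro _ ⟨v, rfl⟩ ⟨w, hw⟩
    exact C.valid (join_adj_inl_inr _ _) hw.symm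
  calc G.chromaticNumber + H.chromaticNumber
      ≤ (Set.range C'.sumLeft).ncard + (Set.range C'.sumRight).ncard :=
        add_le_add C'.sumLeft.chromaticNumber_le_ncard_range
          C'.sumRight.chromaticNumber_le_ncard_range
    _ = (Set.range C'.sumLeft ∪ Set.range C'.sumRight).ncard := by
        rw [Set.ncard_union_eq hdisj]; push_cast; rfl
    _ ≤ m := by
        exact_mod_cast (Set.ncard_le_card _).trans (Nat.card_fin m).le

end SimpleGraph

section Shuriken

variable {V : Type*} {G : SimpleGraph V} {n t : ℕ}

theorem shuriken_adj_of_adj (i j : Fin n) {u v : V} (huv : G.Adj u v) :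
    (shuriken G n t).Adj (i, some u) (j, some v) := by
  rw [shuriken, fromRel_adj]
  exact ⟨by simp [huv.ne], Or.inl (Or.inl ⟨u, v, rfl, rfl, huv⟩)⟩

theorem shuriken_adj_of_lt {i : Fin n} (hi : (i : ℕ) < t) {a b : Option V} (hab : a ≠ b) :
    (shuriken G n t).Adj (i, a) (i, b) := by
  rw [shuriken, fromRel_adj]
  exact ⟨by simp [hab], Or.inl (Or.inr (Or.inl ⟨rfl, hi⟩))⟩

theorem shuriken_adj_of_paired {i j : Fin n} (hij : i ≠ j) (hi : t ≤ (i : ℕ))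
    (hsum : (i : ℕ) + j = n + t - 1) (a b : Option V) :
    (shuriken G n t).Adj (i, a) (j, b) := by
  rw [shuriken, fromRel_adj]
  exact ⟨by simp [hij], Or.inl (Or.inr (Or.inr ⟨hi, hsum⟩))⟩

def shurikenJoinHom {i j : Fin n} (hij : i ≠ j) (hi : t ≤ (i : ℕ))
    (hsum : (i : ℕ) + j = n + t - 1) : G.join G →g shuriken G n t where
  toFun := Sum.elim (fun v => (i, some v)) (fun v => (j, some v))
  map_rel' := by
    rintro (u | u) (v | v) h
    · exact shuriken_adj_of_adj i i (join_adj_inl.1 h)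
    · exact shuriken_adj_of_paired hij hi hsum _ _
    · exact (shuriken_adj_of_paired hij hi hsum _ _).symm
    · exact shuriken_adj_of_adj j j (join_adj_inr.1 h)

theorem card_add_one_le_chromaticNumber_shuriken [Fintype V] {i : Fin n} (hi : (i : ℕ) < t) :
    (Fintype.card V : ℕ∞) + 1 ≤ (shuriken G n t).chromaticNumber := by
  exact_mod_cast le_chromaticNumber_of_pairwise_adj (by simp) (fun a : Option V => (i, a))
    fun _ _ hab => shuriken_adj_of_lt hi hab

theorem two_mul_chromaticNumber_le_shuriken {i j : Fin n} (hij : i ≠ j) (hi : t ≤ (i : ℕ))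
    (hsum : (i : ℕ) + j = n + t - 1) :
    2 * G.chromaticNumber ≤ (shuriken G n t).chromaticNumber := by
  rw [two_mul]
  exact chromaticNumber_add_le_chromaticNumber_join.trans
    (chromaticNumber_mono_of_hom (shurikenJoinHom hij hi hsum))

end Shuriken

theorem shuriken_chromaticNumber_lower_bound {V : Type*} [Fintype V] (G : SimpleGraph V)
    (n t : ℕ) (ht : 1 ≤ t) (htn : t < n) (hev : Even (n - t)) :
    max ((Fintype.card V : ℕ∞) + 1) (2 * G.chromaticNumber) ≤
      (shuriken G n t).chromaticNumber := by
  obtain ⟨m, hm⟩ := hev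
  refine max_le (card_add_one_le_chromaticNumber_shuriken (i := ⟨0, by omega⟩) ht) ?_
  refine two_mul_chromaticNumber_le_shuriken (i := ⟨t, htn⟩) (j := ⟨n - 1, by omega⟩) ?_ le_rfl ?_
  · exact Fin.ne_of_val_ne (by dsimp; omega)
  · dsimp; omega
end

section
/- The independence number of the shuriken graph Shu^t_n(G) equals t + ((n−t)/2)(α(G) + 1), where α(G) is the independence number of G. -/
open SimpleGraph

/-- The independence number: maximum size of a set of pairwise nonadjacent vertices. -/
noncomputable def indepNum {α : Type*} (G : SimpleGraph α) : ℕ :=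
  sSup {k | ∃ s : Finset α, s.card = k ∧ ∀ a ∈ s, ∀ b ∈ s, a ≠ b → ¬ G.Adj a b}

/-!
An independent set of the shuriken graph meets each complete copy in at most one vertex. On a
pair of joined copies it cannot use the same label of `V ∪ {z}` twice, since the two vertices
would be adjacent; and all its labels from `V` together form an independent set of `G`, since
edges of `G` are present between any two copies. So each joined pair contributes at most
`α(G) + 1`. Equality is attained by taking `z` in every complete copy and, in one copy of each
joined pair, `z` together with a maximum independent set of `G`.
-/

open Finset

lemma indepNum_eq_simpleGraph_indepNum {α : Type*} (G : SimpleGraph α) :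
    _root_.indepNum G = G.indepNum := by
  simp only [_root_.indepNum, SimpleGraph.indepNum, isNIndepSet_iff, and_comm]
  rfl

lemma Fin.card_filter_le_val_lt {n a b : ℕ} (hb : b ≤ n) :
    #{i : Fin n | a ≤ (i : ℕ) ∧ (i : ℕ) < b} = b - a := by
  rw [← Nat.card_Ico, ← card_map Fin.valEmbedding]
  congr 1
  ext j
  simp only [mem_map, mem_filter, mem_univ, true_and, Fin.valEmbedding_apply, mem_Ico]
  exact ⟨by rintro ⟨i, hi, rfl⟩; exact hi, fun hj => ⟨⟨j, hj.2.trans_le hb⟩, hj, rfl⟩⟩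

lemma Finset.card_le_card_eraseNone_add_one {α : Type*} (s : Finset (Option α)) :
    #s ≤ #s.eraseNone + 1 := by
  classical
  calc #s ≤ #(insert none s) := card_le_card (subset_insert _ _)
    _ = #s.eraseNone + 1 := by rw [← insertNone_eraseNone, card_insertNone]

namespace SimpleGraph

lemma isIndepSet_fromRel_iff {α : Type*} {r : α → α → Prop} {s : Set α} :
    (fromRel r).IsIndepSet s ↔ s.Pairwise fun a b => ¬ r a b := by
  simp only [isIndepSet_iff, fromRel_adj]
  exact ⟨fun h a ha b hb hab hr => h ha hb hab ⟨hab, .inl hr⟩,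
    fun h a ha b hb hab ⟨_, hr⟩ => hr.elim (h ha hb hab) (h hb ha hab.symm)⟩

end SimpleGraph

section Shuriken

variable {V : Type*} {G : SimpleGraph V} {n t : ℕ}

lemma shuriken_adj_some (i j : Fin n) {x y : V} (h : G.Adj x y) :
    (shuriken G n t).Adj (i, some x) (j, some y) :=
  (fromRel_adj _ _ _).2 ⟨by simp [h.ne], .inl (.inl ⟨x, y, rfl, rfl, h⟩)⟩

lemma shuriken_adj_of_fst_eq {p q : Fin n × Option V} (hpq : p ≠ q) (h : p.1 = q.1)
    (hp : (p.1 : ℕ) < t) : (shuriken G n t).Adj p q :=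
  (fromRel_adj _ _ _).2 ⟨hpq, .inl (.inr (.inl ⟨h, hp⟩))⟩

lemma shuriken_adj_of_fst_add_fst {p q : Fin n × Option V} (hpq : p ≠ q) (hp : t ≤ (p.1 : ℕ))
    (h : (p.1 : ℕ) + q.1 = n + t - 1) : (shuriken G n t).Adj p q :=
  (fromRel_adj _ _ _).2 ⟨hpq, .inl (.inr (.inr ⟨hp, h⟩))⟩

lemma isIndepSet_eraseNone_image_snd_of_shuriken [DecidableEq V] {A : Finset (Fin n × Option V)}
    (hA : (shuriken G n t).IsIndepSet A) : G.IsIndepSet ((A.image Prod.snd).eraseNone : Set V) := by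
  intro x hx y hy hxy hG
  obtain ⟨p, hp, hpx⟩ := mem_image.1 (mem_eraseNone.1 hx)
  obtain ⟨q, hq, hqy⟩ := mem_image.1 (mem_eraseNone.1 hy)
  have hadj : (shuriken G n t).Adj p q := by
    rw [← Prod.mk.eta (p := p), ← Prod.mk.eta (p := q), hpx, hqy]
    exact shuriken_adj_some _ _ hG
  exact hA hp hq hadj.ne hadj

lemma card_image_snd_le_of_shuriken [Finite V] [DecidableEq V] {A : Finset (Fin n × Option V)}
    (hA : (shuriken G n t).IsIndepSet A) : #(A.image Prod.snd) ≤ G.indepNum + 1 :=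
  (card_le_card_eraseNone_add_one _).trans
    (Nat.add_le_add_right (isIndepSet_eraseNone_image_snd_of_shuriken hA).card_le_indepNum 1)

lemma card_filter_fst_lt_le_of_shuriken {A : Finset (Fin n × Option V)}
    (hA : (shuriken G n t).IsIndepSet A) :
    #{p ∈ A | (p.1 : ℕ) < t} ≤ t := by
  classical
  refine (card_le_card_of_injOn (fun p => (p.1 : ℕ)) (t := range t) ?_ ?_).trans_eq (card_range t)
  · intro p hp
    simpa using (mem_filter.1 hp).2
  · intro p hp q hq hpq
    by_contra hne
    exact hA (mem_filter.1 hp).1 (mem_filter.1 hq).1 hne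
      (shuriken_adj_of_fst_eq hne (Fin.ext hpq) (mem_filter.1 hp).2)

lemma card_filter_not_fst_lt_le_of_shuriken [DecidableEq V] {m : ℕ}
    {A : Finset (Fin (t + 2 * m) × Option V)}
    (hA : (shuriken G (t + 2 * m) t).IsIndepSet A) :
    #{p ∈ A | ¬ (p.1 : ℕ) < t} ≤ m * #(A.image Prod.snd) := by
  -- `fold` sends both copies of a joined pair to the same index in `[t, t + m)`.
  let fold : Fin (t + 2 * m) × Option V → ℕ × Option V :=
    fun p => (min p.1 (2 * t + 2 * m - 1 - p.1), p.2)
  refine (card_le_card_of_injOn fold (t := Ico t (t + m) ×ˢ A.image Prod.snd) ?_ ?_).trans ?_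
  · intro p hp
    obtain ⟨hpA, hpt⟩ := mem_filter.1 hp
    have := p.1.isLt
    simp only [fold, coe_product, Set.mem_prod, mem_coe, mem_Ico, mem_image]
    exact ⟨by omega, p, hpA, rfl⟩
  · intro p hp q hq hpq
    obtain ⟨hpA, hpt⟩ := mem_filter.1 hp
    obtain ⟨hqA, hqt⟩ := mem_filter.1 hq
    obtain ⟨h1, h2⟩ := Prod.mk.inj hpq
    by_contra hne
    have hfst : (p.1 : ℕ) ≠ q.1 := fun h => hne (Prod.ext (Fin.ext h) h2)
    exact hA hpA hqA hne (shuriken_adj_of_fst_add_fst hne (by omega) (by omega))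
  · rw [card_product, Nat.card_Ico, Nat.add_sub_cancel_left]

lemma le_indepNum_shuriken [Finite V] [DecidableEq V] {S : Finset V} (hS : G.IsIndepSet S)
    (t m : ℕ) : t + m * (#S + 1) ≤ (shuriken G (t + 2 * m) t).indepNum := by
  let A : Finset (Fin (t + 2 * m) × Option V) :=
    (univ.filter fun i : Fin (t + 2 * m) => (i : ℕ) < t) ×ˢ {none} ∪
      (univ.filter fun i : Fin (t + 2 * m) => t ≤ (i : ℕ) ∧ (i : ℕ) < t + m) ×ˢ S.insertNone
  have mem_A {p} : p ∈ A ↔ (p.1 : ℕ) < t ∧ p.2 = none ∨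
      (t ≤ (p.1 : ℕ) ∧ (p.1 : ℕ) < t + m) ∧ ∀ x ∈ p.2, x ∈ S := by
    simp only [A, mem_union, mem_product, mem_filter, mem_univ, true_and, mem_singleton,
      mem_insertNone]
  have hA : (shuriken G (t + 2 * m) t).IsIndepSet A := by
    rw [shuriken, isIndepSet_fromRel_iff]
    rintro p hp q hq hpq (⟨x, y, hx, hy, hG⟩ | ⟨hfst, hpt⟩ | ⟨hpt, hsum⟩) <;>
      rw [mem_coe, mem_A] at hp hq
    · have hxS := (hp.resolve_left (by simp [hx])).2 x (by simp [hx])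
      have hyS := (hq.resolve_left (by simp [hy])).2 y (by simp [hy])
      exact hS hxS hyS hG.ne hG
    · have hp2 := (hp.resolve_right (by omega)).2
      have hq2 := (hq.resolve_right (by rw [← hfst]; omega)).2
      exact hpq (Prod.ext hfst (hp2.trans hq2.symm))
    · omega
  have hcard : #A = t + m * (#S + 1) := by
    rw [card_union_of_disjoint, card_product, card_product, Fin.card_filter_val_lt,
      Fin.card_filter_le_val_lt (by omega), card_singleton, card_insertNone,
      min_eq_right (by omega), Nat.add_sub_cancel_left, mul_one]
    rw [Finset.disjoint_left]
    intro p hp hp'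
    simp only [mem_product, mem_filter] at hp hp'
    omega
  exact hcard ▸ hA.card_le_indepNum

lemma indepNum_shuriken_le [Finite V] (t m : ℕ) :
    (shuriken G (t + 2 * m) t).indepNum ≤ t + m * (G.indepNum + 1) := by
  classical
  obtain ⟨A, hA⟩ := (shuriken G (t + 2 * m) t).exists_isNIndepSet_indepNum
  rw [← hA.card_eq, ← card_filter_add_card_filter_not (s := A) fun p => (p.1 : ℕ) < t]
  exact Nat.add_le_add (card_filter_fst_lt_le_of_shuriken hA.isIndepSet)
    ((card_filter_not_fst_lt_le_of_shuriken hA.isIndepSet).trans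
      (Nat.mul_le_mul_left m (card_image_snd_le_of_shuriken hA.isIndepSet)))

end Shuriken

theorem shuriken_indepNum_general {V : Type*} [Fintype V] (G : SimpleGraph V)
    (n t : ℕ) (htn : t ≤ n) (hev : Even (n - t)) :
    _root_.indepNum (shuriken G n t) = t + ((n - t) / 2) * (_root_.indepNum G + 1) := by
  classical
  obtain ⟨m, hm⟩ := hev
  obtain rfl : n = t + 2 * m := by omega
  rw [indepNum_eq_simpleGraph_indepNum, indepNum_eq_simpleGraph_indepNum,
    show (t + 2 * m - t) / 2 = m by omega]
  obtain ⟨S, hS⟩ := G.exists_isNIndepSet_indepNum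
  exact (indepNum_shuriken_le t m).antisymm (hS.card_eq ▸ le_indepNum_shuriken hS.isIndepSet t m)

theorem shuriken_indepNum {V : Type*} [Fintype V] (G : SimpleGraph V)
    (n t : ℕ) (ht : 1 ≤ t) (htn : t ≤ n) (hev : Even (n - t)) :
    _root_.indepNum (shuriken G n t) = t + ((n - t) / 2) * (_root_.indepNum G + 1) :=
  shuriken_indepNum_general G n t htn hev
end

section
/- The domination number of the shuriken graph Shu^t_n(G) is at least (n+t)/2. -/
open SimpleGraph

/-- The domination number: minimum size of a dominating set. -/
noncomputable def dominationNumber {α : Type*} (G : SimpleGraph α) : ℕ :=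
  sInf {k | ∃ D : Finset α, D.card = k ∧ ∀ v ∉ D, ∃ u ∈ D, G.Adj u v}

theorem shuriken_dominationNumber_lower_bound {V : Type*} [Fintype V] (G : SimpleGraph V)
    (n t : ℕ) (ht : 1 ≤ t) (htn : t ≤ n) (hev : Even (n - t)) :
    (n + t) / 2 ≤ dominationNumber (shuriken G n t) := by
  classical
  obtain ⟨c, hc⟩ := hev
  apply le_csInf
  · exact ⟨(Finset.univ : Finset (Fin n × Option V)).card, Finset.univ, rfl,
      fun v hv => absurd (Finset.mem_univ v) hv⟩
  · rintro k ⟨D, rfl, hdom⟩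
    set f : Fin n × Option V → ℕ := fun p => min p.1.val (n + t - 1 - p.1.val) with hf
    have key : ∀ i < (n + t) / 2, ∃ d ∈ D, f d = i := by
      intro i hi
      have hin : i < n := by omega
      set z : Fin n × Option V := (⟨i, hin⟩, none) with hz
      by_cases hzD : z ∈ D
      · refine ⟨z, hzD, ?_⟩
        simp only [hf, hz]
        omega
      · obtain ⟨u, huD, hadj⟩ := hdom z hzD
        refine ⟨u, huD, ?_⟩
        rw [shuriken, fromRel_adj] at hadj
        obtain ⟨hne, h | h⟩ := hadj
        · rcases h with ⟨x, y, _, hy, _⟩ | ⟨h1, h2⟩ | ⟨h1, h2⟩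
          · simp [hz] at hy
          · simp only [hz] at h1
            have hu : (u.1 : ℕ) = i := by rw [h1]
            simp only [hf, hu]
            omega
          · simp only [hz] at h2
            simp only [hf]
            omega
        · rcases h with ⟨x, y, hx, _, _⟩ | ⟨h1, h2⟩ | ⟨h1, h2⟩
          · simp [hz] at hx
          · simp only [hz] at h1 h2
            have hu : (u.1 : ℕ) = i := by rw [← h1]
            simp only [hf, hu]
            omega
          · simp only [hz] at h1 h2
            simp only [hf]
            omega
    calc (n + t) / 2 = (Finset.range ((n + t) / 2)).card := by simp
      _ ≤ (D.image f).card := Finset.card_le_card (by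
          intro i hi
          simp only [Finset.mem_range] at hi
          obtain ⟨d, hd, hfd⟩ := key i hi
          exact Finset.mem_image.mpr ⟨d, hd, hfd⟩)
      _ ≤ D.card := Finset.card_image_le
end

section
/- For a non-null finite simple graph G and positive integers t ≤ n with n−t even, the shuriken graph Shu^t_n(G) is Eulerian if and only if t = n, |V(G)| is even, and (every vertex of G has even degree or n is odd). -/
open SimpleGraph

/-- A graph is Eulerian if it admits a closed Eulerian trail. -/
def IsEulerianGraph {α : Type*} [DecidableEq α] (G : SimpleGraph α) : Prop :=
  ∃ (u : α) (w : G.Walk u u), w.IsEulerian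

/-!
The shuriken graph is connected as soon as `G` has an edge, so by the Euler–Hierholzer theorem it
is Eulerian iff all its degrees are even. In a complete copy, `z` has degree `|V|` and `x` has
degree `|V| + (n - 1) d(x)`; in a joined copy, which exists iff `t < n`, `z` has degree `|V| + 1`.
Reading off parities gives the three conditions.
-/

namespace SimpleGraph

variable {V : Type*} [DecidableEq V] {G : SimpleGraph V}

theorem Walk.IsTrail.eq_of_forall_adj_mem_edges {u v : V} {p : G.Walk u v} (hp : p.IsTrail)
    [Fintype (G.neighborSet u)] (hu : Even (G.degree u))
    (h : ∀ w, G.Adj u w → s(u, w) ∈ p.edges) : u = v := by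
  have hcount : p.edges.countP (u ∈ ·) = G.degree u := by
    rw [← card_incidenceFinset_eq_degree, List.countP_eq_length_filter,
      ← List.toFinset_card_of_nodup (hp.edges_nodup.filter _)]
    congr 1
    ext e
    induction e using Sym2.ind with
    | _ a b =>
      simp only [List.mem_toFinset, List.mem_filter, decide_eq_true_eq, mem_incidenceFinset]
      refine ⟨fun ⟨he, hu⟩ => ⟨p.edges_subset_edgeSet he, hu⟩, fun ⟨hab, hu⟩ => ⟨?_, hu⟩⟩
      rcases Sym2.mem_iff.1 hu with rfl | rfl
      · exact h b hab
      · exact Sym2.eq_swap ▸ h a (G.adj_symm hab)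
  by_contra huv
  simpa [hcount, hu, huv] using hp.even_countP_edges_iff u

theorem Preconnected.exists_mem_support_adj_notMem_edges (hG : G.Preconnected) {u v : V}
    (p : G.Walk u v) {e : Sym2 V} (he : e ∈ G.edgeSet) (hep : e ∉ p.edges) :
    ∃ a ∈ p.support, ∃ b, G.Adj a b ∧ s(a, b) ∉ p.edges := by
  induction e using Sym2.ind with
  | _ x y =>
    by_cases hx : x ∈ p.support
    · exact ⟨x, hx, y, he, hep⟩
    obtain ⟨d, -, hd, hd'⟩ :=
      (hG u x).some.exists_boundary_dart {w | w ∈ p.support} p.start_mem_support hx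
    exact ⟨d.fst, hd, d.snd, d.adj, fun h => hd' (p.snd_mem_support_of_mem_edges h)⟩

/-- A longest trail is closed by the parity at its start. If it missed an edge, connectivity would
give an unused edge at one of its vertices, and prepending that edge to the trail rotated to that
vertex would give a longer trail. -/
theorem Connected.exists_isEulerian_of_even_degree [Fintype V] [DecidableRel G.Adj]
    (hG : G.Connected) (hdeg : ∀ v, Even (G.degree v)) :
    ∃ (u : V) (p : G.Walk u u), p.IsEulerian := by
  have := hG.nonempty
  obtain ⟨u, v, p, hp, hmax⟩ := Walk.exists_isTrail_forall_isTrail_length_le_length G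
  have hshort {a b : V} {q : G.Walk a b} (hq : q.IsTrail) {c : V} (hac : G.Adj a c)
      (hcq : s(a, c) ∉ q.edges) : q.length < p.length := by
    have := hmax _ _ (Walk.cons hac.symm q) ((Walk.isTrail_cons _ _).2 ⟨hq, Sym2.eq_swap ▸ hcq⟩)
    rw [Walk.length_cons] at this
    omega
  obtain rfl : u = v := hp.eq_of_forall_adj_mem_edges (hdeg u) fun w huw => by
    by_contra h
    exact (hshort hp huw h).false
  refine ⟨u, p, hp.isEulerian_of_forall_mem fun e he => ?_⟩
  by_contra hep
  obtain ⟨a, ha, b, hab, habp⟩ := hG.preconnected.exists_mem_support_adj_notMem_edges p he hep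
  have := hshort (hp.rotate ha) hab fun h => habp ((p.rotate_edges a ha).mem_iff.1 h)
  rw [Walk.length_rotate] at this
  exact this.false

theorem Connected.isEulerianGraph_iff [Fintype V] [DecidableRel G.Adj]
    (hG : G.Connected) : IsEulerianGraph G ↔ ∀ v, Even (G.degree v) :=
  ⟨fun ⟨_, _, hp⟩ _ => hp.even_degree_iff.2 fun h => absurd rfl h,
    hG.exists_isEulerian_of_even_degree⟩

end SimpleGraph

open Finset

namespace Shuriken

variable {V : Type*} {G : SimpleGraph V} {n t : ℕ}

/-- The reversed half of `fromRel` adds nothing: `G.Adj` is symmetric, and `t ≤ j`,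
`i + j = n + t - 1`, `i < n` force `t ≤ i`. -/
theorem adj_iff {i j : Fin n} {a b : Option V} :
    (shuriken G n t).Adj (i, a) (j, b) ↔ (i, a) ≠ (j, b) ∧
      ((∃ x y, a = some x ∧ b = some y ∧ G.Adj x y) ∨ (i = j ∧ (i : ℕ) < t) ∨
        (t ≤ (i : ℕ) ∧ (i : ℕ) + j = n + t - 1)) := by
  simp only [shuriken, fromRel_adj]
  grind [G.adj_symm, Fin.isLt]

theorem connected (hn : 0 < n) {x₀ y₀ : V} (hxy : G.Adj x₀ y₀) :
    (shuriken G n t).Connected := by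
  let hub : Fin n × Option V := (⟨0, hn⟩, some y₀)
  have hx₀ (j : Fin n) : (shuriken G n t).Reachable hub (j, some x₀) :=
    (adj_iff.2 ⟨by simp [hxy.ne.symm], .inl ⟨y₀, x₀, rfl, rfl, hxy.symm⟩⟩).reachable
  refine (connected_iff_exists_forall_reachable _).2 ⟨hub, fun ⟨i, b⟩ => ?_⟩
  obtain ⟨j, hj⟩ :
      ∃ j : Fin n, (i, b) = (j, some x₀) ∨ (shuriken G n t).Adj (j, some x₀) (i, b) := by
    by_cases hi : (i : ℕ) < t
    · exact ⟨i, or_iff_not_imp_left.2 fun h => adj_iff.2 ⟨Ne.symm h, .inr (.inl ⟨rfl, hi⟩)⟩⟩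
    · refine ⟨⟨n + t - 1 - i, by omega⟩, or_iff_not_imp_left.2 fun h =>
        adj_iff.2 ⟨Ne.symm h, .inr (.inr ⟨by simp only; omega, by simp only; omega⟩)⟩⟩
  rcases hj with h | h
  · exact h ▸ hx₀ j
  · exact (hx₀ j).trans h.reachable

section Degree

variable [Fintype V] [DecidableRel (shuriken G n t).Adj] {i : Fin n}

theorem degree_none_of_lt [DecidableEq V] (hi : (i : ℕ) < t) :
    (shuriken G n t).degree (i, none) = Fintype.card V := by
  have : (shuriken G n t).neighborFinset (i, none) = ({i} ×ˢ univ).erase (i, none) := by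
    ext ⟨j, b⟩
    grind [mem_neighborFinset, adj_iff, Fin.ext_iff, Fin.isLt]
  rw [← card_neighborFinset_eq_degree, this, card_erase_of_mem (by simp)]
  simp

/-- Copy `i` is joined to copy `n + t - 1 - i`, which is a different copy because `n + t` is even. -/
theorem degree_none_of_le (hev : Even (n - t)) (hi : t ≤ (i : ℕ)) :
    (shuriken G n t).degree (i, none) = Fintype.card V + 1 := by
  have : (shuriken G n t).neighborFinset (i, none) = {⟨n + t - 1 - i, by omega⟩} ×ˢ univ := by
    ext ⟨j, b⟩
    grind [mem_neighborFinset, adj_iff, Fin.ext_iff, Fin.isLt]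
  rw [← card_neighborFinset_eq_degree, this]
  simp

theorem degree_some_of_lt [DecidableEq V] [DecidableRel G.Adj] (hi : (i : ℕ) < t) (x : V) :
    (shuriken G n t).degree (i, some x) = Fintype.card V + (n - 1) * G.degree x := by
  have : (shuriken G n t).neighborFinset (i, some x) =
      ({i} ×ˢ univ).erase (i, some x) ∪ (univ.erase i) ×ˢ (G.neighborFinset x).map .some := by
    ext ⟨j, b⟩
    simp only [mem_neighborFinset, adj_iff, ne_eq, Prod.mk.injEq, Option.some.injEq, hi, and_true,
      exists_and_left, exists_eq_left', mem_union, mem_erase, mem_product, mem_singleton, mem_univ,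
      mem_map, Function.Embedding.some_apply]
    grind
  rw [← card_neighborFinset_eq_degree, this,
    card_union_of_disjoint (disjoint_left.2 fun _ _ _ => by grind), card_erase_of_mem (by simp)]
  simp

end Degree

end Shuriken

theorem shuriken_isEulerian_iff {V : Type*} [Fintype V] [DecidableEq V] (G : SimpleGraph V)
    (hG : G.edgeSet.Nonempty)
    (n t : ℕ) (ht : 1 ≤ t) (htn : t ≤ n) (hev : Even (n - t)) :
    IsEulerianGraph (shuriken G n t) ↔
      t = n ∧ Even (Fintype.card V) ∧
        ((∀ x : V, Even (Nat.card (G.neighborSet x))) ∨ Odd n) := by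
  classical
  obtain ⟨⟨x₀, y₀⟩, he⟩ := hG
  have hn : 0 < n := by omega
  have hpred : Even (n - 1) ↔ Odd n := by simpa using Nat.even_sub' hn
  rw [(Shuriken.connected hn he).isEulerianGraph_iff]
  simp only [Nat.card_eq_fintype_card, card_neighborSet_eq_degree]
  constructor
  · intro h
    have hV : Even (Fintype.card V) := by
      simpa only [Shuriken.degree_none_of_lt (i := ⟨0, hn⟩) ht] using h (⟨0, hn⟩, none)
    obtain rfl : t = n := by
      by_contra hne
      have h' := h (⟨t, by omega⟩, none)
      rw [Shuriken.degree_none_of_le hev le_rfl, Nat.even_add_one] at h'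
      exact h' hV
    refine ⟨rfl, hV, or_iff_not_imp_right.2 fun hodd x => ?_⟩
    have h' := h (⟨0, hn⟩, some x)
    rw [Shuriken.degree_some_of_lt ht, Nat.even_add, iff_true_left hV, Nat.even_mul, hpred] at h'
    exact h'.resolve_left hodd
  · rintro ⟨rfl, hV, hdeg⟩ ⟨i, _ | x⟩
    · rwa [Shuriken.degree_none_of_lt i.isLt]
    · rw [Shuriken.degree_some_of_lt i.isLt, Nat.even_add, iff_true_left hV, Nat.even_mul, hpred]
      exact hdeg.symm.imp id fun h => h x
end
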